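/- The single-agent formula ¬□p is a successful formula on K45: the formula ¬□p → [¬□p]¬□p is valid on the class K45 of Kripke models with a transitive and euclidean accessibility relation. -/

import Mathlib

inductive Form (A : Type) : Type
  | atom : ℕ → Form A
  | neg  : Form A → Form A
  | conj : Form A → Form A → Form A
  | box  : A → Form A → Form A
  | ann  : Form A → Form A → Form A
  deriving DecidableEq

namespace Form

/-- ◇_a φ := ¬□_a¬φ -/
def dia {A : Type} (a : A) (φ : Form A) : Form A := .neg (.box a (.neg φ))

/-- φ → ψ := ¬(φ ∧ ¬ψ) -/
def imp {A : Type} (φ ψ : Form A) : Form A := .neg (.conj φ (.neg ψ))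

/-- φ ∨ ψ := ¬(¬φ ∧ ¬ψ) -/
def or {A : Type} (φ ψ : Form A) : Form A := .neg (.conj (.neg φ) (.neg ψ))

/-- ⊥ := p ∧ ¬p -/
def bot {A : Type} : Form A := .conj (.atom 0) (.neg (.atom 0))

def top {A : Type} : Form A := .neg bot

def iff {A : Type} (φ ψ : Form A) : Form A := .conj (imp φ ψ) (imp ψ φ)

end Form

/-- A Kripke model over agents `A` with state set `S`. -/
structure Model (A S : Type) where
  R : A → S → S → Prop
  V : ℕ → S → Prop

/-- Arrow elimination: keep only arrows pointing to states satisfying `P`. -/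
def Model.restrict {A S : Type} (M : Model A S) (P : S → Prop) : Model A S :=
  ⟨fun a s t => M.R a s t ∧ P t, M.V⟩

/-- Satisfaction, with believed announcements interpreted by arrow elimination. -/
def Sat {A S : Type} : Model A S → Form A → S → Prop
  | M, .atom n, s => M.V n s
  | M, .neg φ, s => ¬ Sat M φ s
  | M, .conj φ ψ, s => Sat M φ s ∧ Sat M ψ s
  | M, .box a φ, s => ∀ t : S, M.R a s t → Sat M φ t
  | M, .ann φ ψ, s => Sat (M.restrict (fun t => Sat M φ t)) ψ s

/-- K45: every accessibility relation is transitive and euclidean. -/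
def isK45 {A S : Type} (M : Model A S) : Prop :=
  ∀ a : A, (∀ x y z : S, M.R a x y → M.R a y z → M.R a x z) ∧
    (∀ x y z : S, M.R a x y → M.R a x z → M.R a y z)

/-- KD45: every accessibility relation is transitive, euclidean and serial. -/
def isKD45 {A S : Type} (M : Model A S) : Prop :=
  ∀ a : A, (∀ x y z : S, M.R a x y → M.R a y z → M.R a x z) ∧
    (∀ x y z : S, M.R a x y → M.R a x z → M.R a y z) ∧
    (∀ x : S, ∃ y : S, M.R a x y)

/-! Under a euclidean relation every successor of a state is reflexive. So a witness `t ⊭ p` of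
`s ⊨ ¬□p` also satisfies `¬□p`, via its loop; hence the arrow `s → t` survives the announcement
of `¬□p` and still witnesses `¬□p` afterwards, since announcements do not change the valuation. -/

theorem refl_of_euclidean {S : Type} {r : S → S → Prop}
    (heuc : ∀ x y z : S, r x y → r x z → r y z) {s t : S} (hst : r s t) : r t t :=
  heuc s t t hst hst

section Sat

variable {A S : Type} {M : Model A S}

theorem sat_imp {φ ψ : Form A} {s : S} :
    Sat M (Form.imp φ ψ) s ↔ (Sat M φ s → Sat M ψ s) := by
  simp only [Form.imp, Sat, not_and, not_not]

theorem sat_neg_box {a : A} {φ : Form A} {s : S} :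
    Sat M (Form.neg (Form.box a φ)) s ↔ ∃ t, M.R a s t ∧ ¬ Sat M φ t := by
  simp only [Sat, not_forall, exists_prop]

theorem sat_ann_neg_box_atom_of_euclidean {a : A} {n : ℕ}
    (heuc : ∀ x y z : S, M.R a x y → M.R a x z → M.R a y z) {s : S}
    (hs : Sat M (Form.neg (Form.box a (Form.atom n))) s) :
    Sat M (Form.ann (Form.neg (Form.box a (Form.atom n)))
      (Form.neg (Form.box a (Form.atom n)))) s := by
  obtain ⟨t, hst, hnt⟩ := sat_neg_box.mp hs
  have ht : Sat M (Form.neg (Form.box a (Form.atom n))) t :=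
    sat_neg_box.mpr ⟨t, refl_of_euclidean heuc hst, hnt⟩
  exact sat_neg_box.mpr ⟨t, ⟨hst, ht⟩, hnt⟩

end Sat

/-- ¬□p is a successful formula on K45: ¬□p → [¬□p]¬□p is valid on K45. -/
theorem neg_box_p_successful_on_K45 :
    ∀ (S : Type) (M : Model Unit S) (s : S), isK45 M →
      Sat M (Form.imp (Form.neg (Form.box () (Form.atom 0)))
        (Form.ann (Form.neg (Form.box () (Form.atom 0)))
          (Form.neg (Form.box () (Form.atom 0))))) s := by
  intro S M s hK45
  exact sat_imp.mpr (sat_ann_neg_box_atom_of_euclidean (hK45 ()).2)
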